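/- Let X be a finite multiset of vectors spanning ℝ^r. Then the space P(X) = span{p_Y : Y ⊆ X, X\Y spans ℝ^r} is contained in the kernel of the power ideal I(X) generated by {D_η^{m(η)} : η ≠ 0}, where m(η) is the number of vectors of X not orthogonal to η; i.e., every generator D_η^{m(η)} annihilates every polynomial p_Y with X\Y spanning. -/
import Mathlib

open MvPolynomial

/-- The linear polynomial `t ↦ ⟨x, t⟩` associated to a vector `x ∈ ℝ^r`. -/
noncomputable def linPoly {r : ℕ} (x : Fin r → ℝ) : MvPolynomial (Fin r) ℝ :=
  ∑ i, C (x i) * X i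

/-- The product polynomial `p_Y = ∏_{x ∈ Y} ⟨x, t⟩` of a finite multiset of vectors. -/
noncomputable def prodPoly {r : ℕ} (Y : Multiset (Fin r → ℝ)) : MvPolynomial (Fin r) ℝ :=
  (Y.map linPoly).prod

/-- The directional derivative `D_η = ∑ i, η i ∂/∂t_i`. -/
noncomputable def dirDeriv {r : ℕ} (η : Fin r → ℝ) (f : MvPolynomial (Fin r) ℝ) :
    MvPolynomial (Fin r) ℝ :=
  ∑ i, C (η i) * pderiv i f

lemma dirDeriv_zero {r : ℕ} (η : Fin r → ℝ) : dirDeriv η 0 = 0 := by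
  simp [dirDeriv]

lemma dirDeriv_one {r : ℕ} (η : Fin r → ℝ) : dirDeriv η 1 = 0 := by
  simp [dirDeriv]

lemma dirDeriv_add {r : ℕ} (η : Fin r → ℝ) (f g : MvPolynomial (Fin r) ℝ) :
    dirDeriv η (f + g) = dirDeriv η f + dirDeriv η g := by
  simp [dirDeriv, map_add, mul_add, Finset.sum_add_distrib]

lemma dirDeriv_mul {r : ℕ} (η : Fin r → ℝ) (f g : MvPolynomial (Fin r) ℝ) :
    dirDeriv η (f * g) = dirDeriv η f * g + f * dirDeriv η g := by
  simp only [dirDeriv, pderiv_mul, mul_add]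
  rw [Finset.sum_add_distrib, Finset.sum_mul, Finset.mul_sum]
  congr 1 <;> (apply Finset.sum_congr rfl; intros; ring)

lemma dirDeriv_C {r : ℕ} (η : Fin r → ℝ) (c : ℝ) : dirDeriv η (C c) = 0 := by
  simp [dirDeriv]

lemma dirDeriv_Cmul {r : ℕ} (η : Fin r → ℝ) (c : ℝ) (f : MvPolynomial (Fin r) ℝ) :
    dirDeriv η (C c * f) = C c * dirDeriv η f := by
  rw [dirDeriv_mul, dirDeriv_C, zero_mul, zero_add]

lemma dirDeriv_linPoly {r : ℕ} (η x : Fin r → ℝ) :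
    dirDeriv η (linPoly x) = C (∑ i, η i * x i) := by
  simp [dirDeriv, linPoly, pderiv_X, Finset.mul_sum, map_sum]
  congr 1
  ext i
  rw [Finset.sum_eq_single i] <;> simp +contextual [Pi.single_apply, eq_comm]

lemma iterate_dirDeriv_zero {r : ℕ} (η : Fin r → ℝ) (k : ℕ) :
    (dirDeriv η)^[k] 0 = 0 :=
  Function.iterate_fixed (dirDeriv_zero η) k

lemma iterate_dirDeriv_add {r : ℕ} (η : Fin r → ℝ) (k : ℕ) (f g : MvPolynomial (Fin r) ℝ) :
    (dirDeriv η)^[k] (f + g) = (dirDeriv η)^[k] f + (dirDeriv η)^[k] g := by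
  induction k generalizing f g with
  | zero => rfl
  | succ k ih => rw [Function.iterate_succ_apply, Function.iterate_succ_apply,
      Function.iterate_succ_apply, dirDeriv_add, ih]

lemma iterate_dirDeriv_Cmul {r : ℕ} (η : Fin r → ℝ) (k : ℕ) (c : ℝ)
    (f : MvPolynomial (Fin r) ℝ) :
    (dirDeriv η)^[k] (C c * f) = C c * (dirDeriv η)^[k] f := by
  induction k generalizing f with
  | zero => rfl
  | succ k ih => rw [Function.iterate_succ_apply, Function.iterate_succ_apply,
      dirDeriv_Cmul, ih]

lemma leibniz_iter {r : ℕ} (η : Fin r → ℝ) (f : MvPolynomial (Fin r) ℝ) (c : ℝ)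
    (hf : dirDeriv η f = C c) (k : ℕ) (g : MvPolynomial (Fin r) ℝ) :
    (dirDeriv η)^[k+1] (f * g)
      = f * (dirDeriv η)^[k+1] g + C ((k+1 : ℕ) * c) * (dirDeriv η)^[k] g := by
  induction k generalizing g with
  | zero =>
    show dirDeriv η (f * g) = f * dirDeriv η g + C ((0+1 : ℕ) * c) * g
    rw [dirDeriv_mul, hf]
    push_cast
    ring
  | succ k ih =>
    rw [Function.iterate_succ_apply (dirDeriv η) (k+1) (f*g), dirDeriv_mul, hf,
      iterate_dirDeriv_add, iterate_dirDeriv_Cmul, ih (dirDeriv η g),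
      ← Function.iterate_succ_apply (dirDeriv η) (k+1) g,
      ← Function.iterate_succ_apply (dirDeriv η) k g,
      show ((k+1+1 : ℕ) : ℝ) = ((k+1 : ℕ) : ℝ) + 1 by push_cast; ring,
      add_mul, one_mul, map_add]
    ring

open Classical in
lemma key {r : ℕ} (η : Fin r → ℝ) (Y : Multiset (Fin r → ℝ)) :
    (dirDeriv η)^[(Y.filter fun x => (∑ i, η i * x i) ≠ 0).card + 1] (prodPoly Y) = 0 := by
  induction Y using Multiset.induction_on with
  | empty => simp [prodPoly, dirDeriv_one]
  | cons x Y ih =>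
    have hp : prodPoly (x ::ₘ Y) = linPoly x * prodPoly Y := by
      simp [prodPoly]
    by_cases hx : (∑ i, η i * x i) ≠ 0
    · have hfc : ((x ::ₘ Y).filter fun y => (∑ i, η i * y i) ≠ 0)
          = x ::ₘ (Y.filter fun y => (∑ i, η i * y i) ≠ 0) :=
        Multiset.filter_cons_of_pos _ hx
      rw [hfc]
      simp only [Multiset.card_cons, hp]
      rw [leibniz_iter η _ _ (dirDeriv_linPoly η x) _ (prodPoly Y)]
      have h2 : (dirDeriv η)^[(Y.filter fun x => (∑ i, η i * x i) ≠ 0).card + 1 + 1]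
          (prodPoly Y) = 0 := by
        rw [Function.iterate_succ_apply', ih, dirDeriv_zero]
      rw [h2, ih]
      simp
    · have hfc : ((x ::ₘ Y).filter fun y => (∑ i, η i * y i) ≠ 0)
          = Y.filter fun y => (∑ i, η i * y i) ≠ 0 :=
        Multiset.filter_cons_of_neg _ hx
      rw [hfc]
      push_neg at hx
      rw [hp, leibniz_iter η _ _ (by rw [dirDeriv_linPoly, hx]) _ (prodPoly Y), ih]
      simp

open Classical in
/-- If `X \ Y` spans `ℝ^r`, then `p_Y` is annihilated by `D_η^{m(η)}` for every `η ≠ 0`,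
where `m(η)` is the number of vectors of `X` not orthogonal to `η`; that is,
`P(X) ⊆ ker I(X)`. -/
theorem prodPoly_mem_kernel {r : ℕ} (Xm : Multiset (Fin r → ℝ))
    (hX : Submodule.span ℝ {x | x ∈ Xm} = ⊤) :
    ∀ Y ≤ Xm, Submodule.span ℝ {x | x ∈ Xm - Y} = ⊤ →
      ∀ η : Fin r → ℝ, η ≠ 0 →
        (dirDeriv η)^[(Xm.filter fun x => (∑ i, η i * x i) ≠ 0).card] (prodPoly Y) = 0 := by
  intro Y hY hspan η hη
  have hex : ∃ x ∈ Xm - Y, (∑ i, η i * x i) ≠ 0 := by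
    by_contra h
    push_neg at h
    set φ : (Fin r → ℝ) →ₗ[ℝ] ℝ :=
      { toFun := fun v => ∑ i, η i * v i
        map_add' := by intro a b; simp [mul_add, Finset.sum_add_distrib]
        map_smul' := by intro c a; simp [Finset.mul_sum, mul_comm, mul_left_comm] }
    have hsub : {x | x ∈ Xm - Y} ⊆ (LinearMap.ker φ : Submodule ℝ (Fin r → ℝ)) := by
      intro x hx
      simpa [φ] using h x hx
    have hker := Submodule.span_le.mpr hsub
    rw [hspan, top_le_iff] at hker
    have hηker : φ η = 0 := by
      have : η ∈ LinearMap.ker φ := by rw [hker]; trivial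
      simpa using this
    have hz : ∀ i, η i = 0 := by
      intro i
      have hsum : (∑ i, η i * η i) = 0 := by simpa [φ] using hηker
      have := (Finset.sum_eq_zero_iff_of_nonneg (fun j _ => mul_self_nonneg (η j))).mp hsum
        i (Finset.mem_univ i)
      exact mul_self_eq_zero.mp this
    exact hη (funext hz)
  obtain ⟨x, hxmem, hx⟩ := hex
  have hXeq : Y + (Xm - Y) = Xm := add_tsub_cancel_of_le hY
  have hcard : (Y.filter fun x => (∑ i, η i * x i) ≠ 0).card + 1
      ≤ (Xm.filter fun x => (∑ i, η i * x i) ≠ 0).card := by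
    rw [← hXeq, Multiset.filter_add, Multiset.card_add]
    have hmemf : x ∈ (Xm - Y).filter (fun x => (∑ i, η i * x i) ≠ 0) :=
      Multiset.mem_filter.mpr ⟨hxmem, hx⟩
    have : 0 < ((Xm - Y).filter fun x => (∑ i, η i * x i) ≠ 0).card := by
      rw [Multiset.card_pos]
      intro hc
      rw [hc] at hmemf
      exact Multiset.notMem_zero x hmemf
    exact Nat.add_le_add_left this _
  obtain ⟨d, hd⟩ := Nat.exists_eq_add_of_le hcard
  rw [hd, add_comm, Function.iterate_add_apply, key, iterate_dirDeriv_zero]
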